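/- arXiv:2505.24353 — 3 statements merged into one kernel-verified Lean document; each statement's English description precedes it below -/
import Mathlib

section
/- For every nonzero Υ ∈ G_q one has exp₀(log₀(Υ)) = Υ, i.e. the Riemannian exponential map at the origin is a left inverse of the Riemannian logarithmic map at the origin. -/
/-!
Write `Υ = (a, w)` and `N = N(Υ)`. By definition `cosh N = (e^{-a} + e^a (1 + ‖w‖²)) / 2`, and
`e^a e^{-a} = 1` turns `cosh² N - 1` into `(cosh N - e^{-a})² + ‖w‖²`: the vector
`(cosh N - e^{-a}, w)` has length `sinh N`. Hence `log₀ Υ` has length `N`, and substituting it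
into `exp₀` gives back `e^{-a}` under the logarithm and `w` in the second component.
-/

/-- The inverse hyperbolic cosine, `arccosh x = log (x + √(x² − 1))`
(the inverse of `cosh` on `[0, ∞)` for `x ≥ 1`). -/
noncomputable def arccosh (x : ℝ) : ℝ :=
  Real.log (x + Real.sqrt (x ^ 2 - 1))

/-- The solvable group operation on `ℝ × ℝ^q`:
`Ψ * Υ = (Υ₁ + Ψ₁, Υ₂ + e^{−Υ₁}·Ψ₂)`. -/
noncomputable def gmul {q : ℕ} (Ψ Υ : ℝ × EuclideanSpace ℝ (Fin q)) :
    ℝ × EuclideanSpace ℝ (Fin q) :=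
  (Υ.1 + Ψ.1, Υ.2 + Real.exp (-Υ.1) • Ψ.2)

/-- The group inverse `Υ⁻¹ = (−Υ₁, −e^{Υ₁}·Υ₂)`. -/
noncomputable def ginv {q : ℕ} (Υ : ℝ × EuclideanSpace ℝ (Fin q)) :
    ℝ × EuclideanSpace ℝ (Fin q) :=
  (-Υ.1, -(Real.exp Υ.1 • Υ.2))

/-- The norm `N(Υ) = arccosh((e^{−Υ₁} + e^{Υ₁}(1 + ‖Υ₂‖²))/2)`. -/
noncomputable def Nnorm {q : ℕ} (Υ : ℝ × EuclideanSpace ℝ (Fin q)) : ℝ :=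
  arccosh ((Real.exp (-Υ.1) + Real.exp Υ.1 * (1 + ‖Υ.2‖ ^ 2)) / 2)

/-- The distance `d(Υ, Ψ) = N(Ψ⁻¹ * Υ)`. -/
noncomputable def gdist {q : ℕ} (Υ Ψ : ℝ × EuclideanSpace ℝ (Fin q)) : ℝ :=
  Nnorm (gmul (ginv Ψ) Υ)

/-- The Euclidean norm on `ℝ × ℝ^q`: `‖v‖ = (v₁² + ‖v₂‖²)^{1/2}`. -/
noncomputable def nrm {q : ℕ} (v : ℝ × EuclideanSpace ℝ (Fin q)) : ℝ :=
  Real.sqrt (v.1 ^ 2 + ‖v.2‖ ^ 2)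

/-- The Riemannian logarithmic map at the origin:
`log₀(Υ) = (N(Υ)/sinh N(Υ))·(cosh N(Υ) − e^{−Υ₁}, Υ₂)`. -/
noncomputable def log0 {q : ℕ} (Υ : ℝ × EuclideanSpace ℝ (Fin q)) :
    ℝ × EuclideanSpace ℝ (Fin q) :=
  (Nnorm Υ / Real.sinh (Nnorm Υ)) •
    ((Real.cosh (Nnorm Υ) - Real.exp (-Υ.1), Υ.2) : ℝ × EuclideanSpace ℝ (Fin q))

/-- The Riemannian exponential map at the origin:
`exp₀(v) = (−log(cosh ‖v‖ − (v₁/‖v‖)·sinh ‖v‖), (v₂/‖v‖)·sinh ‖v‖)`. -/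
noncomputable def exp0 {q : ℕ} (v : ℝ × EuclideanSpace ℝ (Fin q)) :
    ℝ × EuclideanSpace ℝ (Fin q) :=
  (-Real.log (Real.cosh (nrm v) - v.1 / nrm v * Real.sinh (nrm v)),
    (Real.sinh (nrm v) / nrm v) • v.2)

open Real

theorem arccosh_eq_arcosh : arccosh = Real.arcosh := rfl

section

variable {q : ℕ}

theorem one_le_cosh_Nnorm_arg (Υ : ℝ × EuclideanSpace ℝ (Fin q)) :
    1 ≤ (exp (-Υ.1) + exp Υ.1 * (1 + ‖Υ.2‖ ^ 2)) / 2 := by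
  have h : cosh Υ.1 ≤ (exp (-Υ.1) + exp Υ.1 * (1 + ‖Υ.2‖ ^ 2)) / 2 := by
    rw [cosh_eq]; nlinarith [exp_pos Υ.1, sq_nonneg ‖Υ.2‖]
  exact (one_le_cosh _).trans h

theorem one_lt_cosh_Nnorm_arg {Υ : ℝ × EuclideanSpace ℝ (Fin q)} (hΥ : Υ ≠ 0) :
    1 < (exp (-Υ.1) + exp Υ.1 * (1 + ‖Υ.2‖ ^ 2)) / 2 := by
  obtain ⟨a, w⟩ := Υ
  rcases eq_or_ne w 0 with rfl | hw
  · have ha : a ≠ 0 := fun h => hΥ (by simp [h])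
    simpa [cosh_eq, add_comm] using one_lt_cosh.mpr ha
  · have hw : 0 < ‖w‖ ^ 2 := by positivity
    have h := one_le_cosh a
    rw [cosh_eq] at h
    dsimp only
    nlinarith [mul_pos (exp_pos a) hw]

theorem cosh_Nnorm (Υ : ℝ × EuclideanSpace ℝ (Fin q)) :
    cosh (Nnorm Υ) = (exp (-Υ.1) + exp Υ.1 * (1 + ‖Υ.2‖ ^ 2)) / 2 := by
  rw [Nnorm, arccosh_eq_arcosh, cosh_arcosh (one_le_cosh_Nnorm_arg Υ)]

theorem Nnorm_nonneg (Υ : ℝ × EuclideanSpace ℝ (Fin q)) : 0 ≤ Nnorm Υ := by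
  rw [Nnorm, arccosh_eq_arcosh]
  exact arcosh_nonneg (one_le_cosh_Nnorm_arg Υ)

theorem Nnorm_pos {Υ : ℝ × EuclideanSpace ℝ (Fin q)} (hΥ : Υ ≠ 0) : 0 < Nnorm Υ := by
  rw [Nnorm, arccosh_eq_arcosh]
  exact arcosh_pos (one_lt_cosh_Nnorm_arg hΥ)

theorem sinh_Nnorm_sq (Υ : ℝ × EuclideanSpace ℝ (Fin q)) :
    sinh (Nnorm Υ) ^ 2 = (cosh (Nnorm Υ) - exp (-Υ.1)) ^ 2 + ‖Υ.2‖ ^ 2 := by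
  have hexp : exp Υ.1 * exp (-Υ.1) = 1 := by rw [← exp_add, add_neg_cancel, exp_zero]
  have hsq := cosh_sq (Nnorm Υ)
  rw [cosh_Nnorm] at hsq ⊢
  linear_combination -hsq + (1 + ‖Υ.2‖ ^ 2) * hexp

theorem nrm_smul (c : ℝ) (v : ℝ × EuclideanSpace ℝ (Fin q)) : nrm (c • v) = |c| * nrm v := by
  rw [nrm, nrm, Prod.smul_fst, Prod.smul_snd, norm_smul, smul_eq_mul, Real.norm_eq_abs, mul_pow,
    mul_pow, sq_abs, ← mul_add, sqrt_mul (sq_nonneg c), sqrt_sq_eq_abs]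

theorem nrm_log0 {Υ : ℝ × EuclideanSpace ℝ (Fin q)} (hΥ : Υ ≠ 0) : nrm (log0 Υ) = Nnorm Υ := by
  have hsinh : 0 < sinh (Nnorm Υ) := sinh_pos_iff.mpr (Nnorm_pos hΥ)
  have hdir : nrm ((cosh (Nnorm Υ) - exp (-Υ.1), Υ.2) : ℝ × EuclideanSpace ℝ (Fin q)) =
      sinh (Nnorm Υ) := by
    rw [nrm, ← sinh_Nnorm_sq, sqrt_sq hsinh.le]
  rw [log0, nrm_smul, hdir, abs_of_nonneg (div_nonneg (Nnorm_nonneg Υ) hsinh.le),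
    div_mul_cancel₀ _ hsinh.ne']

end

theorem stmt_13_general (q : ℕ)
    (Υ : ℝ × EuclideanSpace ℝ (Fin q)) (hΥ : Υ ≠ 0) :
    exp0 (log0 Υ) = Υ := by
  have hN : Nnorm Υ ≠ 0 := (Nnorm_pos hΥ).ne'
  have hsinh : sinh (Nnorm Υ) ≠ 0 := (sinh_pos_iff.mpr (Nnorm_pos hΥ)).ne'
  rw [exp0, nrm_log0 hΥ]
  refine Prod.ext ?_ ?_
  · have hcoord : cosh (Nnorm Υ) - (log0 Υ).1 / Nnorm Υ * sinh (Nnorm Υ) = exp (-Υ.1) := by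
      simp only [log0, Prod.smul_fst, smul_eq_mul]
      field_simp
      ring
    rw [hcoord, log_exp, neg_neg]
  · simp only [log0, Prod.smul_snd, smul_smul]
    rw [show sinh (Nnorm Υ) / Nnorm Υ * (Nnorm Υ / sinh (Nnorm Υ)) = 1 by field_simp, one_smul]

/-- For every nonzero `Υ ∈ G_q` one has `exp₀(log₀(Υ)) = Υ`: the Riemannian
exponential map at the origin is a left inverse of the Riemannian logarithmic
map at the origin. -/
theorem stmt_13 (q : ℕ) (hq : 1 ≤ q)
    (Υ : ℝ × EuclideanSpace ℝ (Fin q)) (hΥ : Υ ≠ 0) :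
    exp0 (log0 Υ) = Υ :=
  stmt_13_general q Υ hΥ
end

section
/- For every nonzero v = (v₁, v₂) ∈ ℝ × ℝ^q and all s, t ∈ ℝ one has d(γ₀(v, s), γ₀(v, t)) = ‖v‖·|t − s|; i.e. the curve t ↦ γ₀(v, t) is a globally distance-realizing geodesic of (G_q, d) through the origin. -/
/-- The geodesic ray from the origin with initial velocity `v`:
`γ₀(v, t) = (−log(cosh(‖v‖t) − (v₁/‖v‖)·sinh(‖v‖t)), (v₂/‖v‖)·sinh(‖v‖t))`. -/
noncomputable def geo {q : ℕ} (v : ℝ × EuclideanSpace ℝ (Fin q)) (t : ℝ) :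
    ℝ × EuclideanSpace ℝ (Fin q) :=
  (-Real.log (Real.cosh (nrm v * t) - v.1 / nrm v * Real.sinh (nrm v * t)),
    (Real.sinh (nrm v * t) / nrm v) • v.2)

open Real

lemma arccosh_cosh {x : ℝ} (hx : 0 ≤ x) : arccosh (cosh x) = x := by
  have hsq : cosh x ^ 2 - 1 = sinh x ^ 2 := by linarith [cosh_sq x]
  rw [arccosh, hsq, sqrt_sq (sinh_nonneg_iff.mpr hx), cosh_add_sinh, log_exp]

lemma gdist_eq {q : ℕ} (Υ Ψ : ℝ × EuclideanSpace ℝ (Fin q)) :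
    gdist Υ Ψ = arccosh ((exp (Ψ.1 - Υ.1)
      + exp (Υ.1 - Ψ.1) * (1 + ‖Υ.2 - exp (Ψ.1 - Υ.1) • Ψ.2‖ ^ 2)) / 2) := by
  simp only [gdist, Nnorm, gmul, ginv, smul_neg, smul_smul, ← exp_add, ← sub_eq_add_neg]
  ring_nf

lemma cosh_sub_mul_sinh_pos {a : ℝ} (ha : a ^ 2 ≤ 1) (x : ℝ) : 0 < cosh x - a * sinh x := by
  nlinarith [cosh_sq x, cosh_pos x, mul_nonneg (sub_nonneg.mpr ha) (sq_nonneg (sinh x))]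

lemma sinh_mul_cosh_sub_mul_sinh_sub (a x y : ℝ) :
    sinh x * (cosh y - a * sinh y) - (cosh x - a * sinh x) * sinh y = sinh (x - y) := by
  rw [sinh_sub]; ring

lemma cosh_sub_mul_sinh_sq_add_sq (a x y : ℝ) :
    (cosh x - a * sinh x) ^ 2 + (cosh y - a * sinh y) ^ 2 + (1 - a ^ 2) * sinh (x - y) ^ 2
      = 2 * (cosh x - a * sinh x) * (cosh y - a * sinh y) * cosh (x - y) := by
  rw [sinh_sub, cosh_sub]
  linear_combination
    (1 + (1 - a ^ 2) * sinh y ^ 2 - 2 * cosh y ^ 2 + 2 * a * cosh y * sinh y) * cosh_sq x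
      - (1 + (1 + a ^ 2) * sinh x ^ 2 - 2 * a * cosh x * sinh x) * cosh_sq y

noncomputable def unitGeo {q : ℕ} (a : ℝ) (w : EuclideanSpace ℝ (Fin q)) (x : ℝ) :
    ℝ × EuclideanSpace ℝ (Fin q) :=
  (-log (cosh x - a * sinh x), sinh x • w)

lemma gdist_unitGeo {q : ℕ} {a : ℝ} {w : EuclideanSpace ℝ (Fin q)} (h : a ^ 2 + ‖w‖ ^ 2 = 1)
    (x y : ℝ) : gdist (unitGeo a w x) (unitGeo a w y) = |x - y| := by
  have ha : a ^ 2 ≤ 1 := by linarith [sq_nonneg ‖w‖]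
  have hx := cosh_sub_mul_sinh_pos ha x
  have hy := cosh_sub_mul_sinh_pos ha y
  set fx := cosh x - a * sinh x
  set fy := cosh y - a * sinh y
  have hexp : exp (-log fy - -log fx) = fx / fy := by
    rw [neg_sub_neg, exp_sub, exp_log hx, exp_log hy]
  have hexp' : exp (-log fx - -log fy) = fy / fx := by
    rw [neg_sub_neg, exp_sub, exp_log hx, exp_log hy]
  have hsnd : sinh x • w - (fx / fy) • sinh y • w = (sinh (x - y) / fy) • w := by
    rw [smul_smul, ← sub_smul, ← sinh_mul_cosh_sub_mul_sinh_sub a]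
    congr 1
    field_simp
    ring
  have harg : (fx / fy + fy / fx * (1 + (sinh (x - y) / fy) ^ 2 * ‖w‖ ^ 2)) / 2
      = cosh (x - y) := by
    rw [show ‖w‖ ^ 2 = 1 - a ^ 2 by linarith]
    field_simp
    linear_combination cosh_sub_mul_sinh_sq_add_sq a x y
  rw [gdist_eq]
  simp only [unitGeo]
  rw [hexp, hexp', hsnd, norm_smul, mul_pow, norm_eq_abs, sq_abs, harg,
    ← cosh_abs, arccosh_cosh (abs_nonneg _)]

lemma nrm_pos {q : ℕ} {v : ℝ × EuclideanSpace ℝ (Fin q)} (hv : v ≠ 0) : 0 < nrm v := by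
  refine sqrt_pos.mpr (lt_of_le_of_ne (by positivity) fun h ↦ hv ?_)
  have h1 : v.1 = 0 := by nlinarith [sq_nonneg v.1, sq_nonneg ‖v.2‖]
  have h2 : ‖v.2‖ = 0 := by nlinarith [sq_nonneg v.1, sq_nonneg ‖v.2‖]
  exact Prod.ext h1 (norm_eq_zero.mp h2)

lemma sq_fst_div_nrm_add_sq_norm_smul {q : ℕ} {v : ℝ × EuclideanSpace ℝ (Fin q)} (hv : v ≠ 0) :
    (v.1 / nrm v) ^ 2 + ‖(nrm v)⁻¹ • v.2‖ ^ 2 = 1 := by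
  have hr := nrm_pos hv
  have hr2 : nrm v ^ 2 = v.1 ^ 2 + ‖v.2‖ ^ 2 := sq_sqrt (by positivity)
  rw [norm_smul, norm_inv, norm_of_nonneg hr.le]
  field_simp
  exact hr2.symm

lemma geo_eq_unitGeo {q : ℕ} (v : ℝ × EuclideanSpace ℝ (Fin q)) (t : ℝ) :
    geo v t = unitGeo (v.1 / nrm v) ((nrm v)⁻¹ • v.2) (nrm v * t) := by
  simp only [geo, unitGeo, smul_smul, div_eq_mul_inv]

theorem stmt_15_general (q : ℕ)
    (v : ℝ × EuclideanSpace ℝ (Fin q)) (hv : v ≠ 0) (s t : ℝ) :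
    gdist (geo v s) (geo v t) = nrm v * |t - s| := by
  rw [geo_eq_unitGeo, geo_eq_unitGeo, gdist_unitGeo (sq_fst_div_nrm_add_sq_norm_smul hv), ← mul_sub,
    abs_mul, abs_of_pos (nrm_pos hv), abs_sub_comm]

/-- For every nonzero `v ∈ ℝ × ℝ^q` and all `s, t ∈ ℝ` one has
`d(γ₀(v, s), γ₀(v, t)) = ‖v‖·|t − s|`: the curve `t ↦ γ₀(v, t)` is a globally
distance-realizing geodesic of `(G_q, d)` through the origin. -/
theorem stmt_15 (q : ℕ) (hq : 1 ≤ q)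
    (v : ℝ × EuclideanSpace ℝ (Fin q)) (hv : v ≠ 0) (s t : ℝ) :
    gdist (geo v s) (geo v t) = nrm v * |t - s| :=
  stmt_15_general q v hv s t
end

section
/- Let H₀ = {Ψ ∈ G_q : Ψ_{2,q} = 0} be the fundamental hyperplane, where Ψ_{2,q} denotes the last paint coordinate. Then for every Υ ∈ G_q, the infimum of d(Υ, Ψ) over Ψ ∈ H₀ is attained and equals (1/2)·arccosh(1 + 2·Υ_{2,q}²). -/
/-!
The last coordinate of `Ψ⁻¹ * Υ` equals `Υ_{2,q}` for every `Ψ ∈ H₀`, and conversely every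
`Φ` is of the form `Ψ⁻¹ * Υ` (take `Ψ = Υ * Φ⁻¹`), with `Ψ ∈ H₀` exactly when `Φ_{2,q} = Υ_{2,q}`.
So the distance to `H₀` is the least value of `N(Φ)` over `Φ` with `Φ_{2,q} = s := Υ_{2,q}`.
Dropping the other coordinates of `Φ₂` and applying AM-GM in `e^{Φ₁}` gives
`N(Φ) ≥ arccosh √(1 + s²)`, with equality at `Φ = (−log √(1 + s²), s·e_q)`;
the duplication formula `arccosh (2c² − 1) = 2 arccosh c` turns this into the stated value.
-/

lemma arccosh_le_arccosh {a b : ℝ} (ha : 1 ≤ a) (hab : a ≤ b) : arccosh a ≤ arccosh b := by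
  have hpos : 0 < a + Real.sqrt (a ^ 2 - 1) := by positivity
  have hsqrt := Real.sqrt_le_sqrt (show a ^ 2 - 1 ≤ b ^ 2 - 1 by nlinarith)
  exact Real.log_le_log hpos (by linarith)

lemma arccosh_two_mul_sq_sub_one {c : ℝ} (hc : 1 ≤ c) :
    arccosh (2 * c ^ 2 - 1) = 2 * arccosh c := by
  have hsq := Real.sq_sqrt (show 0 ≤ c ^ 2 - 1 by nlinarith)
  have hsqrt : Real.sqrt ((2 * c ^ 2 - 1) ^ 2 - 1) = 2 * c * Real.sqrt (c ^ 2 - 1) := by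
    rw [show (2 * c ^ 2 - 1) ^ 2 - 1 = (2 * c) ^ 2 * (c ^ 2 - 1) by ring,
      Real.sqrt_mul (by positivity), Real.sqrt_sq (by linarith)]
  have hsquare : 2 * c ^ 2 - 1 + 2 * c * Real.sqrt (c ^ 2 - 1)
      = (c + Real.sqrt (c ^ 2 - 1)) ^ 2 := by nlinarith
  rw [arccosh, arccosh, hsqrt, hsquare, Real.log_pow, Nat.cast_ofNat]

lemma two_mul_le_exp_neg_add_exp_mul_sq (c t : ℝ) :
    2 * c ≤ Real.exp (-t) + Real.exp t * c ^ 2 := by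
  have hprod : Real.exp (-t) * Real.exp t = 1 := by rw [← Real.exp_add, neg_add_cancel, Real.exp_zero]
  nlinarith [sq_nonneg (Real.exp t * c - 1), Real.exp_pos (-t)]

lemma arccosh_sqrt_one_add_sq_apply_le_Nnorm {q : ℕ} (Φ : ℝ × EuclideanSpace ℝ (Fin q))
    (i : Fin q) : arccosh (Real.sqrt (1 + Φ.2 i ^ 2)) ≤ Nnorm Φ := by
  set c := Real.sqrt (1 + Φ.2 i ^ 2)
  have hc : c ^ 2 = 1 + Φ.2 i ^ 2 := Real.sq_sqrt (by positivity)
  have hc1 : 1 ≤ c := Real.one_le_sqrt.mpr (by nlinarith [sq_nonneg (Φ.2 i)])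
  have hcoord : Φ.2 i ^ 2 ≤ ‖Φ.2‖ ^ 2 := by
    simpa only [Real.norm_eq_abs, sq_abs] using
      pow_le_pow_left₀ (norm_nonneg _) (PiLp.norm_apply_le Φ.2 i) 2
  have hamgm := two_mul_le_exp_neg_add_exp_mul_sq c Φ.1
  refine arccosh_le_arccosh hc1 ?_
  nlinarith [Real.exp_pos Φ.1]

lemma Nnorm_neg_log_sqrt_single {q : ℕ} (i : Fin q) (s : ℝ) :
    Nnorm (-Real.log (Real.sqrt (1 + s ^ 2)), EuclideanSpace.single i s)
      = arccosh (Real.sqrt (1 + s ^ 2)) := by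
  set c := Real.sqrt (1 + s ^ 2)
  have hc : c ^ 2 = 1 + s ^ 2 := Real.sq_sqrt (by positivity)
  have hc0 : 0 < c := Real.sqrt_pos.mpr (by positivity)
  have hnorm : ‖EuclideanSpace.single i s‖ = |s| := by simp
  rw [Nnorm, hnorm, sq_abs, neg_neg, Real.exp_neg, Real.exp_log hc0, ← hc]
  congr 1
  field_simp
  ring

lemma gmul_ginv_snd_apply {q : ℕ} (Υ Ψ : ℝ × EuclideanSpace ℝ (Fin q)) (i : Fin q) :
    (gmul (ginv Ψ) Υ).2 i = Υ.2 i - Real.exp (-Υ.1) * Real.exp Ψ.1 * Ψ.2 i := by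
  simp only [gmul, ginv, PiLp.add_apply, PiLp.smul_apply, PiLp.neg_apply, smul_eq_mul]
  ring

lemma gmul_ginv_gmul_ginv {q : ℕ} (Υ Φ : ℝ × EuclideanSpace ℝ (Fin q)) :
    gmul (ginv (gmul Υ (ginv Φ))) Υ = Φ := by
  ext i
  · simp only [gmul, ginv]
    ring
  · simp only [gmul, ginv, PiLp.add_apply, PiLp.smul_apply, PiLp.neg_apply, smul_eq_mul]
    simp only [Real.exp_add, Real.exp_neg, neg_neg]
    field_simp
    ring

/-- The distance of a point `Υ` to the fundamental hyperplane
`H₀ = {Ψ ∈ G_q : Ψ_{2,q} = 0}` is attained and equals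
`(1/2)·arccosh(1 + 2·Υ_{2,q}²)`. -/
theorem stmt_18 (q : ℕ) (hq : 1 ≤ q) (Υ : ℝ × EuclideanSpace ℝ (Fin q)) :
    IsLeast (gdist Υ '' {Ψ : ℝ × EuclideanSpace ℝ (Fin q) | Ψ.2 ⟨q - 1, by omega⟩ = 0})
      ((1 / 2) * arccosh (1 + 2 * (Υ.2 ⟨q - 1, by omega⟩) ^ 2)) := by
  set i : Fin q := ⟨q - 1, by omega⟩
  set s := Υ.2 i
  have hc : Real.sqrt (1 + s ^ 2) ^ 2 = 1 + s ^ 2 := Real.sq_sqrt (by positivity)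
  have hvalue : (1 / 2) * arccosh (1 + 2 * s ^ 2) = arccosh (Real.sqrt (1 + s ^ 2)) := by
    rw [show 1 + 2 * s ^ 2 = 2 * Real.sqrt (1 + s ^ 2) ^ 2 - 1 by rw [hc]; ring,
      arccosh_two_mul_sq_sub_one (Real.one_le_sqrt.mpr (by nlinarith [sq_nonneg s]))]
    ring
  rw [hvalue]
  constructor
  · set Φ : ℝ × EuclideanSpace ℝ (Fin q) :=
      (-Real.log (Real.sqrt (1 + s ^ 2)), EuclideanSpace.single i s)
    refine ⟨gmul Υ (ginv Φ), ?_, ?_⟩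
    · simp [Φ, gmul, ginv, s]
    · rw [gdist, gmul_ginv_gmul_ginv, Nnorm_neg_log_sqrt_single]
  · rintro _ ⟨Ψ, hΨ, rfl⟩
    have hcoord : (gmul (ginv Ψ) Υ).2 i = s := by
      rw [gmul_ginv_snd_apply, Set.mem_ofPred_eq.mp hΨ, mul_zero, sub_zero]
    simpa only [gdist, hcoord] using arccosh_sqrt_one_add_sq_apply_le_Nnorm (gmul (ginv Ψ) Υ) i
end
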